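/- arXiv:1610.06646 — 5 statements merged into one kernel-verified Lean document; each statement's English description precedes it below -/
import Mathlib

section
/- On the group algebra ℂS_3, the operators R(z,k) satisfy the parameter-dependent Yang–Baxter equation: for all real numbers x and y, R(x,1)∘R(x+y,2)∘R(y,1) = R(y,2)∘R(x+y,1)∘R(x,2). -/
/-!
Up to the scalar normalisations, which commute with everything, both sides are left
multiplication by a product of three factors `1 + p • s` in `ℂ[S₃]`, with `s` one of the two
adjacent transpositions. Expanding, the two products differ by
`pq (a² - b²) + pq (p + q) (aba - bab)`, which vanishes because the transpositions are
involutions satisfying the braid relation.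
-/

/-- The Yang–Baxter scattering gate `R(z,t) = (1+z²)^{-1/2}·(I + i z·L_{(t,t+1)})` on the
group algebra `ℂS_n`, realized as left multiplication by the corresponding group-algebra
element; `t : Fin (n-1)` encodes the adjacent transposition of (0-indexed) positions
`t` and `t+1`. -/
noncomputable def BallPerm.Rgate (n : ℕ) (z : ℝ) (t : Fin (n - 1)) :
    Module.End ℂ (MonoidAlgebra ℂ (Equiv.Perm (Fin n))) :=
  LinearMap.mulLeft ℂ
    (((Real.sqrt (1 + z ^ 2))⁻¹ : ℂ) •
      ((1 : MonoidAlgebra ℂ (Equiv.Perm (Fin n)))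
        + (Complex.I * z) •
          MonoidAlgebra.single
            (Equiv.swap (⟨t.1, by have := t.isLt; omega⟩ : Fin n)
              (⟨t.1 + 1, by have := t.isLt; omega⟩ : Fin n)) (1 : ℂ)))

open Equiv MonoidAlgebra

theorem Equiv.swap_mul_swap_mul_swap_braid {α : Type*} [DecidableEq α] {i j k : α}
    (hij : i ≠ j) (hik : i ≠ k) (hjk : j ≠ k) :
    swap i j * swap j k * swap i j = swap j k * swap i j * swap j k := by
  rw [swap_mul_swap_mul_swap hij hik, swap_comm i j, swap_comm j k,
    swap_mul_swap_mul_swap hjk.symm hik.symm, swap_comm]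

section YangBaxter

variable {R A : Type*} [CommSemiring R] [Semiring A] [Algebra R A] {a b : A}

theorem one_add_smul_yangBaxter (hsq : a * a = b * b) (hbraid : a * b * a = b * a * b)
    (p q : R) :
    (1 + p • a) * (1 + (p + q) • b) * (1 + q • a)
      = (1 + q • b) * (1 + (p + q) • a) * (1 + p • b) := by
  simp only [mul_add, add_mul, one_mul, mul_one, smul_mul_smul_comm, hsq, hbraid]
  module

theorem smul_one_add_smul_yangBaxter (hsq : a * a = b * b) (hbraid : a * b * a = b * a * b)
    (c d e p q : R) :
    (c • (1 + p • a)) * (d • (1 + (p + q) • b)) * (e • (1 + q • a))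
      = (e • (1 + q • b)) * (d • (1 + (p + q) • a)) * (c • (1 + p • b)) := by
  simp only [smul_mul_smul_comm, one_add_smul_yangBaxter hsq hbraid]
  congr 1
  ring

end YangBaxter

theorem BallPerm.Rgate_three_zero (z : ℝ) :
    BallPerm.Rgate 3 z 0 = LinearMap.mulLeft ℂ (((Real.sqrt (1 + z ^ 2))⁻¹ : ℂ) •
      (1 + (Complex.I * z) • of ℂ _ (swap (0 : Fin 3) 1))) :=
  rfl

theorem BallPerm.Rgate_three_one (z : ℝ) :
    BallPerm.Rgate 3 z 1 = LinearMap.mulLeft ℂ (((Real.sqrt (1 + z ^ 2))⁻¹ : ℂ) •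
      (1 + (Complex.I * z) • of ℂ _ (swap (1 : Fin 3) 2))) :=
  rfl

/-- On `ℂS_3`, the gates `R(z,k)` satisfy the parameter-dependent Yang–Baxter equation:
`R(x,1)∘R(x+y,2)∘R(y,1) = R(y,2)∘R(x+y,1)∘R(x,2)` for all real `x`, `y`.
(Here `k = 1, 2` are the 1-indexed positions, encoded as `0, 1 : Fin 2`.) -/
theorem yangBaxter_Rgate (x y : ℝ) :
    BallPerm.Rgate 3 x 0 ∘ₗ BallPerm.Rgate 3 (x + y) 1 ∘ₗ BallPerm.Rgate 3 y 0
      = BallPerm.Rgate 3 y 1 ∘ₗ BallPerm.Rgate 3 (x + y) 0 ∘ₗ BallPerm.Rgate 3 x 1 := by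
  have hsq : of ℂ _ (swap (0 : Fin 3) 1) * of ℂ _ (swap 0 1)
      = of ℂ _ (swap (1 : Fin 3) 2) * of ℂ _ (swap 1 2) := by
    simp only [← map_mul, swap_mul_self]
  have hbraid : of ℂ _ (swap (0 : Fin 3) 1) * of ℂ _ (swap 1 2) * of ℂ _ (swap 0 1)
      = of ℂ _ (swap (1 : Fin 3) 2) * of ℂ _ (swap 0 1) * of ℂ _ (swap 1 2) := by
    simp only [← map_mul, swap_mul_swap_mul_swap_braid (i := (0 : Fin 3)) (j := 1) (k := 2)
      (by decide) (by decide) (by decide)]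
  simp only [BallPerm.Rgate_three_zero, BallPerm.Rgate_three_one, ← LinearMap.mulLeft_mul,
    ← mul_assoc, Complex.ofReal_add, mul_add]
  rw [smul_one_add_smul_yangBaxter hsq hbraid]
end

section
/- Let z₁, z₂, z₃, z′₁, z′₂, z′₃ be real numbers, all nonzero, such that on ℂS_3 the equation R(z₁,1)∘R(z₂,2)∘R(z₃,1) = R(z′₁,2)∘R(z′₂,1)∘R(z′₃,2) holds. Then z₁ = z′₃, z₃ = z′₁, and z₂ = z′₂ = z₁ + z₃. In other words, up to the trivial solutions with a vanishing parameter, the solution of the parameter-dependent Yang–Baxter equation for the R operators is unique. -/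
/-! Applied to `1 ∈ ℂS₃`, the operator identity becomes an identity in the group algebra.
With `s = (1 2)`, `t = (2 3)` and `u = i z`, each side is a nonzero multiple of
`(1 + u₁s)(1 + u₂t)(1 + u₃s) = (1 + u₁u₃) + (u₁ + u₃)s + u₂t + u₁u₂ st + u₂u₃ ts + u₁u₂u₃ sts`
(with `s` and `t` exchanged on the right). As `sts = tst` and the six permutations are distinct,
dividing the `sts` coefficient by the `st` and `ts` coefficients gives `z₃ = z′₁` and `z₁ = z′₃`;
the coefficients of `st`, `t` and `s` then force `z₂ = z′₂ = z₁ + z₃`. -/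

namespace BallPerm

open MonoidAlgebra Equiv

theorem yangBaxter_params_of_coeffs {K : Type*} [CommRing K] [IsDomain K]
    {c c' u₁ u₂ u₃ v₁ v₂ v₃ : K} (hc : c ≠ 0) (hc' : c' ≠ 0)
    (hv₁ : v₁ ≠ 0) (hv₂ : v₂ ≠ 0) (hv₃ : v₃ ≠ 0)
    (hs : c * (u₁ + u₃) = c' * v₂) (ht : c * u₂ = c' * (v₁ + v₃))
    (hst : c * (u₁ * u₂) = c' * (v₂ * v₃)) (hts : c * (u₂ * u₃) = c' * (v₁ * v₂))
    (hsts : c * (u₁ * u₂ * u₃) = c' * (v₁ * v₂ * v₃)) :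
    u₁ = v₃ ∧ u₃ = v₁ ∧ u₂ = v₂ ∧ u₂ = u₁ + u₃ := by
  have h₃₁ : u₃ = v₁ :=
    mul_left_cancel₀ (mul_ne_zero (mul_ne_zero hc' hv₂) hv₃) <| by
      linear_combination hsts - u₃ * hst
  have h₁₃ : u₁ = v₃ :=
    mul_left_cancel₀ (mul_ne_zero (mul_ne_zero hc' hv₁) hv₂) <| by
      linear_combination hsts - u₁ * hts
  have h₂ : c * u₂ = c' * v₂ :=
    mul_right_cancel₀ hv₃ <| by linear_combination hst - c * u₂ * h₁₃
  have hv₂_sum : v₂ = u₁ + u₃ :=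
    mul_left_cancel₀ hc' <| by linear_combination ht - h₂ - c' * (h₁₃ + h₃₁)
  have hu₂_sum : u₂ = u₁ + u₃ :=
    mul_left_cancel₀ hc <| by linear_combination h₂ - hs
  exact ⟨h₁₃, h₃₁, hu₂_sum.trans hv₂_sum.symm, hu₂_sum⟩

theorem yangBaxter_product_expand {k G : Type*} [CommSemiring k] [Monoid G] (s t : G)
    (hs : s * s = 1) (u₁ u₂ u₃ : k) :
    (1 + single s u₁) * (1 + single t u₂) * (1 + single s u₃) =
      single 1 (1 + u₁ * u₃) + single s (u₁ + u₃) + single t u₂ + single (s * t) (u₁ * u₂) +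
        single (t * s) (u₂ * u₃) + single (s * t * s) (u₁ * u₂ * u₃) := by
  simp only [add_mul, mul_add, single_mul_single, one_mul, mul_one, hs, single_add]
  rw [MonoidAlgebra.one_def]
  abel

theorem yangBaxter_params_of_eq {K : Type*} [CommRing K] [IsDomain K]
    {c c' u₁ u₂ u₃ v₁ v₂ v₃ : K} (hc : c ≠ 0) (hc' : c' ≠ 0)
    (hv₁ : v₁ ≠ 0) (hv₂ : v₂ ≠ 0) (hv₃ : v₃ ≠ 0)
    (h : c • ((1 + single (swap 0 1) u₁) * (1 + single (swap 1 2) u₂) *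
          (1 + single (swap 0 1) u₃) : MonoidAlgebra K (Perm (Fin 3))) =
      c' • ((1 + single (swap 1 2) v₁) * (1 + single (swap 0 1) v₂) *
          (1 + single (swap 1 2) v₃))) :
    u₁ = v₃ ∧ u₃ = v₁ ∧ u₂ = v₂ ∧ u₂ = u₁ + u₃ := by
  rw [yangBaxter_product_expand _ _ (swap_mul_self _ _),
    yangBaxter_product_expand _ _ (swap_mul_self _ _)] at h
  have hcoeff (g : Perm (Fin 3)) := congrArg (coeff · g) h
  have e_s := hcoeff (swap 0 1)
  have e_t := hcoeff (swap 1 2)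
  have e_st := hcoeff (swap 0 1 * swap 1 2)
  have e_ts := hcoeff (swap 1 2 * swap 0 1)
  have e_sts := hcoeff (swap 0 1 * swap 1 2 * swap 0 1)
  simp +decide only [coeff_smul_apply, coeff_add, coeff_single, Finsupp.add_apply,
    Finsupp.single_apply, smul_eq_mul, if_true, if_false, add_zero, zero_add]
    at e_s e_t e_st e_ts e_sts
  exact yangBaxter_params_of_coeffs hc hc' hv₁ hv₂ hv₃ e_s e_t e_st e_ts e_sts

theorem Rgate_three_zero_s5 (z : ℝ) :
    Rgate 3 z 0 = LinearMap.mulLeft ℂ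
      (((√(1 + z ^ 2))⁻¹ : ℂ) • (1 + single (swap 0 1) (Complex.I * z))) := by
  simp only [Rgate, smul_single', mul_one]
  rfl

theorem Rgate_three_one_s5 (z : ℝ) :
    Rgate 3 z 1 = LinearMap.mulLeft ℂ
      (((√(1 + z ^ 2))⁻¹ : ℂ) • (1 + single (swap 1 2) (Complex.I * z))) := by
  simp only [Rgate, smul_single', mul_one]
  rfl

end BallPerm

open Complex in
theorem yangBaxter_solution_unique_general (z₁ z₂ z₃ z₁' z₂' z₃' : ℝ)
    (h₁' : z₁' ≠ 0) (h₂' : z₂' ≠ 0) (h₃' : z₃' ≠ 0)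
    (hYB : BallPerm.Rgate 3 z₁ 0 ∘ₗ BallPerm.Rgate 3 z₂ 1 ∘ₗ BallPerm.Rgate 3 z₃ 0
      = BallPerm.Rgate 3 z₁' 1 ∘ₗ BallPerm.Rgate 3 z₂' 0 ∘ₗ BallPerm.Rgate 3 z₃' 1) :
    z₁ = z₃' ∧ z₃ = z₁' ∧ z₂ = z₂' ∧ z₂ = z₁ + z₃ := by
  simp only [BallPerm.Rgate_three_zero_s5, BallPerm.Rgate_three_one_s5, ← LinearMap.mulLeft_mul,
    LinearMap.mulLeft_inj, smul_mul_smul, ← mul_assoc] at hYB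
  have hN (z : ℝ) : ((√(1 + z ^ 2))⁻¹ : ℂ) ≠ 0 :=
    inv_ne_zero (ofReal_ne_zero.mpr (Real.sqrt_pos.mpr (by positivity)).ne')
  have hI {z : ℝ} (hz : z ≠ 0) : I * z ≠ 0 := mul_ne_zero I_ne_zero (ofReal_ne_zero.mpr hz)
  obtain ⟨e₁₃, e₃₁, e₂₂, e₂⟩ := BallPerm.yangBaxter_params_of_eq
    (mul_ne_zero (mul_ne_zero (hN z₁) (hN z₂)) (hN z₃))
    (mul_ne_zero (mul_ne_zero (hN z₁') (hN z₂')) (hN z₃')) (hI h₁') (hI h₂') (hI h₃') hYB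
  simp only [← mul_add, ← ofReal_add, mul_right_inj' I_ne_zero, ofReal_inj] at e₁₃ e₃₁ e₂₂ e₂
  exact ⟨e₁₃, e₃₁, e₂₂, e₂⟩

/-- Uniqueness of the nontrivial solution of the parameter-dependent Yang–Baxter equation
for the `R` gates on `ℂS_3`: if all six rapidities are nonzero and
`R(z₁,1)∘R(z₂,2)∘R(z₃,1) = R(z′₁,2)∘R(z′₂,1)∘R(z′₃,2)`, then
`z₁ = z′₃`, `z₃ = z′₁` and `z₂ = z′₂ = z₁ + z₃`. -/
theorem yangBaxter_solution_unique (z₁ z₂ z₃ z₁' z₂' z₃' : ℝ)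
    (h₁ : z₁ ≠ 0) (h₂ : z₂ ≠ 0) (h₃ : z₃ ≠ 0)
    (h₁' : z₁' ≠ 0) (h₂' : z₂' ≠ 0) (h₃' : z₃' ≠ 0)
    (hYB : BallPerm.Rgate 3 z₁ 0 ∘ₗ BallPerm.Rgate 3 z₂ 1 ∘ₗ BallPerm.Rgate 3 z₃ 0
      = BallPerm.Rgate 3 z₁' 1 ∘ₗ BallPerm.Rgate 3 z₂' 0 ∘ₗ BallPerm.Rgate 3 z₃' 1) :
    z₁ = z₃' ∧ z₃ = z₁' ∧ z₂ = z₂' ∧ z₂ = z₁ + z₃ :=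
  yangBaxter_solution_unique_general z₁ z₂ z₃ z₁' z₂' z₃' h₁' h₂' h₃' hYB
end

section
/- Let z₁, z₂, z₃, z′₁, z′₂, z′₃ be real numbers such that on ℂS_3 the equation R(z₁,1)∘R(z₂,2)∘R(z₃,1) = R(z′₁,2)∘R(z′₂,1)∘R(z′₃,2) holds, and set Γ := √(((1+z′₁²)(1+z′₂²)(1+z′₃²))/((1+z₁²)(1+z₂²)(1+z₃²))). Then the following six equalities hold: (1) Γ·(1 − z₁z₃) = 1 − z′₁z′₃; (2) Γ·(z₁ + z₃) = z′₂; (3) Γ·z₂ = z′₁ + z′₃; (4) Γ·z₁z₂ = z′₂z′₃; (5) Γ·z₂z₃ = z′₁z′₂; (6) Γ·z₁z₂z₃ = z′₁z′₂z′₃. (These follow by comparing the coefficients of the six group elements e, s₁, s₂, s₁s₂, s₂s₁, s₁s₂s₁ on the two sides.) -/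
/-!
Applied to `1 ∈ ℂS₃`, each side of the Yang–Baxter equation becomes a product of three elements
`(1 + z²)^{-1/2} (1 + i z s)`. Since `s₁² = s₂² = 1` and `s₁s₂s₁ = s₂s₁s₂`, both products are
combinations of the six elements `e, s₁, s₂, s₁s₂, s₂s₁, s₁s₂s₁` of `S₃`, and comparing
coefficients gives six identities whose normalizing factors combine into `Γ`.
-/

open Equiv MonoidAlgebra Complex

section Braid

variable {k G : Type*} [Semiring k] [Monoid G]

noncomputable def braidCombination (a b : G) (p₀ p₁ p₂ p₃ p₄ p₅ : k) : MonoidAlgebra k G :=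
  single 1 p₀ + single a p₁ + single b p₂ + single (a * b) p₃ + single (b * a) p₄ +
    single (a * b * a) p₅

theorem one_add_single_mul_one_add_single_mul_one_add_single {a : G} (ha : a * a = 1) (b : G)
    (x y w : k) :
    (1 + single a x) * (1 + single b y) * (1 + single a w) =
      braidCombination a b (1 + x * w) (x + w) y (x * y) (y * w) (x * y * w) := by
  simp only [braidCombination, add_mul, mul_add, single_mul_single, one_mul, mul_one, ha,
    single_add]
  rw [← MonoidAlgebra.one_def]
  abel

/-- In `S₃` the elements `e, s₁, s₂, s₁s₂, s₂s₁, s₁s₂s₁ = s₂s₁s₂` are pairwise distinct. -/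
theorem smul_braidCombination_eq_smul_braidCombination {c c' p₀ p₁ p₂ p₃ p₄ p₅ q₀ q₁ q₂ q₃ q₄ q₅ : k}
    (h : c • braidCombination (swap (0 : Fin 3) 1) (swap 1 2) p₀ p₁ p₂ p₃ p₄ p₅ =
      c' • braidCombination (swap (1 : Fin 3) 2) (swap 0 1) q₀ q₁ q₂ q₃ q₄ q₅) :
    c * p₀ = c' * q₀ ∧ c * p₁ = c' * q₂ ∧ c * p₂ = c' * q₁ ∧ c * p₃ = c' * q₄ ∧
      c * p₄ = c' * q₃ ∧ c * p₅ = c' * q₅ := by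
  have hcoeff (g : Perm (Fin 3)) := congrArg (fun f => f.coeff g) h
  simp only [braidCombination, coeff_smul, coeff_add, coeff_single, Finsupp.smul_apply,
    Finsupp.add_apply, Finsupp.single_apply, smul_eq_mul] at hcoeff
  have h₀ := hcoeff 1
  have h₁ := hcoeff (swap 0 1)
  have h₂ := hcoeff (swap 1 2)
  have h₃ := hcoeff (swap 0 1 * swap 1 2)
  have h₄ := hcoeff (swap 1 2 * swap 0 1)
  have h₅ := hcoeff (swap 0 1 * swap 1 2 * swap 0 1)
  simp (disch := decide) only [if_pos, if_neg, add_zero, zero_add] at h₀ h₁ h₂ h₃ h₄ h₅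
  exact ⟨h₀, h₁, h₂, h₃, h₄, h₅⟩

end Braid

theorem sqrt_div_mul_eq_of_inv_sqrt_mul_eq {P P' r r' : ℝ} {ℓ : ℕ} (hP' : 0 < P')
    (h : ((√P)⁻¹ : ℂ) * (I ^ ℓ * r) = ((√P')⁻¹ : ℂ) * (I ^ ℓ * r')) : √(P' / P) * r = r' := by
  have hr : (√P)⁻¹ * r = (√P')⁻¹ * r' := by
    apply Complex.ofReal_injective
    push_cast
    apply mul_left_cancel₀ (pow_ne_zero ℓ I_ne_zero)
    linear_combination h
  rw [Real.sqrt_div hP'.le, div_eq_mul_inv, mul_assoc, hr, ← mul_assoc,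
    mul_inv_cancel₀ (Real.sqrt_pos.2 hP').ne', one_mul]

namespace BallPerm

def adjSwap (n : ℕ) (t : Fin (n - 1)) : Perm (Fin n) :=
  swap ⟨t.1, by have := t.isLt; omega⟩ ⟨t.1 + 1, by have := t.isLt; omega⟩

theorem Rgate_eq_mulLeft (n : ℕ) (z : ℝ) (t : Fin (n - 1)) :
    Rgate n z t = LinearMap.mulLeft ℂ
      (((√(1 + z ^ 2))⁻¹ : ℂ) • (1 + single (adjSwap n t) (I * z))) := by
  rw [Rgate, smul_single', mul_one]
  rfl

/-- The coefficient of a word of length `ℓ` in `s_t, s_u` is `I ^ ℓ` times a real number. -/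
theorem Rgate_comp_Rgate_comp_Rgate_apply_one (n : ℕ) (x y w : ℝ) (t u : Fin (n - 1)) :
    (Rgate n x t ∘ₗ Rgate n y u ∘ₗ Rgate n w t) 1 =
      ((√((1 + x ^ 2) * (1 + y ^ 2) * (1 + w ^ 2)))⁻¹ : ℂ) •
        braidCombination (adjSwap n t) (adjSwap n u) (I ^ 0 * ↑(1 - x * w)) (I ^ 1 * ↑(x + w))
          (I ^ 1 * ↑y) (I ^ 2 * ↑(x * y)) (I ^ 2 * ↑(y * w)) (I ^ 3 * ↑(x * y * w)) := by
  simp only [Rgate_eq_mulLeft, LinearMap.comp_apply, LinearMap.mulLeft_apply, mul_one,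
    smul_mul_smul, ← mul_assoc]
  rw [one_add_single_mul_one_add_single_mul_one_add_single (a := adjSwap n t) (swap_mul_self _ _)]
  congr 1
  · rw [Real.sqrt_mul (by positivity), Real.sqrt_mul (by positivity)]
    push_cast
    rw [mul_inv, mul_inv]
  · congr 1 <;> push_cast
    · linear_combination (x * w : ℂ) * I_mul_I
    all_goals ring

end BallPerm

/-- If `R(z₁,1)∘R(z₂,2)∘R(z₃,1) = R(z′₁,2)∘R(z′₂,1)∘R(z′₃,2)` holds on `ℂS_3` and
`Γ = √((1+z′₁²)(1+z′₂²)(1+z′₃²)/((1+z₁²)(1+z₂²)(1+z₃²)))`, then the six equalities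
obtained by comparing the coefficients of `e, s₁, s₂, s₁s₂, s₂s₁, s₁s₂s₁` hold. -/
theorem yangBaxter_coefficient_relations (z₁ z₂ z₃ z₁' z₂' z₃' : ℝ)
    (hYB : BallPerm.Rgate 3 z₁ 0 ∘ₗ BallPerm.Rgate 3 z₂ 1 ∘ₗ BallPerm.Rgate 3 z₃ 0
      = BallPerm.Rgate 3 z₁' 1 ∘ₗ BallPerm.Rgate 3 z₂' 0 ∘ₗ BallPerm.Rgate 3 z₃' 1) :
    let Γ : ℝ := Real.sqrt (((1 + z₁' ^ 2) * (1 + z₂' ^ 2) * (1 + z₃' ^ 2)) /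
      ((1 + z₁ ^ 2) * (1 + z₂ ^ 2) * (1 + z₃ ^ 2)))
    Γ * (1 - z₁ * z₃) = 1 - z₁' * z₃' ∧
    Γ * (z₁ + z₃) = z₂' ∧
    Γ * z₂ = z₁' + z₃' ∧
    Γ * (z₁ * z₂) = z₂' * z₃' ∧
    Γ * (z₂ * z₃) = z₁' * z₂' ∧
    Γ * (z₁ * z₂ * z₃) = z₁' * z₂' * z₃' := by
  intro Γ
  have h := LinearMap.congr_fun hYB 1
  rw [BallPerm.Rgate_comp_Rgate_comp_Rgate_apply_one,
    BallPerm.Rgate_comp_Rgate_comp_Rgate_apply_one] at h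
  obtain ⟨h₀, h₁, h₂, h₃, h₄, h₅⟩ := smul_braidCombination_eq_smul_braidCombination h
  have hP' : 0 < (1 + z₁' ^ 2) * (1 + z₂' ^ 2) * (1 + z₃' ^ 2) := by positivity
  exact ⟨sqrt_div_mul_eq_of_inv_sqrt_mul_eq hP' h₀, sqrt_div_mul_eq_of_inv_sqrt_mul_eq hP' h₁,
    sqrt_div_mul_eq_of_inv_sqrt_mul_eq hP' h₂, sqrt_div_mul_eq_of_inv_sqrt_mul_eq hP' h₃,
    sqrt_div_mul_eq_of_inv_sqrt_mul_eq hP' h₄, sqrt_div_mul_eq_of_inv_sqrt_mul_eq hP' h₅⟩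
end

section
/- (Classical Yang–Baxter solution.) In the real group algebra ℝS_3, define for a real parameter x ≥ 0 and k ∈ {1,2} the doubly stochastic element Rₖ(x) := (e + x·Lₖ)/(1+x), which performs the adjacent swap Lₖ with probability x/(1+x) and otherwise does nothing. Then for all real x, y ≥ 0: R₁(x)·R₂(x+y)·R₁(y) = R₂(y)·R₁(x+y)·R₂(x). -/
/-- The element `L₁` of the real group algebra `ℝS₃`, corresponding to the adjacent
transposition `(1 2)` (0-indexed: `swap 0 1`). -/
noncomputable def BallPerm.L₁ : MonoidAlgebra ℝ (Equiv.Perm (Fin 3)) :=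
  MonoidAlgebra.single (Equiv.swap (0 : Fin 3) 1) (1 : ℝ)

/-- The element `L₂` of the real group algebra `ℝS₃`, corresponding to the adjacent
transposition `(2 3)` (0-indexed: `swap 1 2`). -/
noncomputable def BallPerm.L₂ : MonoidAlgebra ℝ (Equiv.Perm (Fin 3)) :=
  MonoidAlgebra.single (Equiv.swap (1 : Fin 3) 2) (1 : ℝ)

/-- The doubly stochastic element `R(x) = (e + x·L)/(1+x)` of `ℝS₃`, performing the swap
`L` with probability `x/(1+x)` and otherwise doing nothing. -/
noncomputable def BallPerm.Rcl (x : ℝ) (L : MonoidAlgebra ℝ (Equiv.Perm (Fin 3))) :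
    MonoidAlgebra ℝ (Equiv.Perm (Fin 3)) :=
  (1 + x)⁻¹ • ((1 : MonoidAlgebra ℝ (Equiv.Perm (Fin 3))) + x • L)

/-! Both sides of `(1 + xA)(1 + (x + y)B)(1 + yA) = (1 + yB)(1 + (x + y)A)(1 + xB)` expand to
`1 + xy + (x + y)(A + B) + x(x + y)·AB + y(x + y)·BA + xy(x + y)·ABA`, using only `A² = B² = 1`
(for the product of the outer factors) and the braid relation `ABA = BAB`, both of which the
adjacent transpositions satisfy. The normalisations `(1 + t)⁻¹` are central scalars whose
products agree on both sides. -/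

theorem yangBaxter_one_add_smul {K R : Type*} [CommRing K] [Ring R] [Algebra K R]
    {A B : R} (hA : A * A = 1) (hB : B * B = 1) (hAB : A * B * A = B * A * B) (x y : K) :
    (1 + x • A) * (1 + (x + y) • B) * (1 + y • A)
      = (1 + y • B) * (1 + (x + y) • A) * (1 + x • B) := by
  simp only [mul_add, add_mul, mul_one, one_mul, smul_mul_assoc, mul_smul_comm,
    mul_assoc, hA, hB]
  rw [← mul_assoc A B A, hAB, ← mul_assoc B A B]
  module

theorem single_swap_mul_self {k α : Type*} [Semiring k] [DecidableEq α] (a b : α) :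
    (MonoidAlgebra.single (Equiv.swap a b) 1 * MonoidAlgebra.single (Equiv.swap a b) 1 :
      MonoidAlgebra k (Equiv.Perm α)) = 1 := by
  rw [MonoidAlgebra.single_mul_single, Equiv.swap_mul_self, one_mul, MonoidAlgebra.one_def]

namespace BallPerm

theorem L₁_mul_L₂_mul_L₁ : L₁ * L₂ * L₁ = L₂ * L₁ * L₂ := by
  simp only [L₁, L₂, MonoidAlgebra.single_mul_single, one_mul]
  congr 1
  decide

end BallPerm

theorem classical_yangBaxter_general (x y : ℝ) :
    BallPerm.Rcl x BallPerm.L₁ * BallPerm.Rcl (x + y) BallPerm.L₂ *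
        BallPerm.Rcl y BallPerm.L₁
      = BallPerm.Rcl y BallPerm.L₂ * BallPerm.Rcl (x + y) BallPerm.L₁ *
        BallPerm.Rcl x BallPerm.L₂ := by
  simp only [BallPerm.Rcl, smul_mul_assoc, mul_smul_comm, smul_smul]
  rw [yangBaxter_one_add_smul (single_swap_mul_self _ _) (single_swap_mul_self _ _)
    BallPerm.L₁_mul_L₂_mul_L₁]
  congr 1
  ring

/-- Classical Yang–Baxter solution: for all `x, y ≥ 0`,
`R₁(x)·R₂(x+y)·R₁(y) = R₂(y)·R₁(x+y)·R₂(x)` in the real group algebra `ℝS₃`. -/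
theorem classical_yangBaxter (x y : ℝ) (hx : 0 ≤ x) (hy : 0 ≤ y) :
    BallPerm.Rcl x BallPerm.L₁ * BallPerm.Rcl (x + y) BallPerm.L₂ *
        BallPerm.Rcl y BallPerm.L₁
      = BallPerm.Rcl y BallPerm.L₂ * BallPerm.Rcl (x + y) BallPerm.L₁ *
        BallPerm.Rcl x BallPerm.L₂ :=
  classical_yangBaxter_general x y
end

section
/- (Simulation of exchange-interaction circuits by ball permutation.) Fix n ≥ 1 and 0 ≤ k ≤ n. For a bit string x ∈ {0,1}ⁿ of Hamming weight k, define φ(x) := Σ over all σ ∈ S_n such that for every position p, x_p = 1 if and only if σ(p) ≤ k, of |σ⟩ ∈ ℂS_n. Then: (i) ⟨φ(x′), φ(x)⟩ = k!·(n−k)! if x = x′ and 0 otherwise; (ii) for every pair of positions i ≠ j and every θ ∈ ℝ, the ball-swap gate |σ⟩ ↦ cos θ·|σ⟩ + i sin θ·|σ∘(i j)⟩ maps φ(x) to cos θ·φ(x) + i sin θ·φ(x∘(i j)), where x∘(i j) is the string with bits i and j exchanged; consequently (iii) for any composition U = T(θ_m,i_m,j_m)∘⋯∘T(θ_1,i_1,j_1)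 of exchange gates on ℂ^({0,1}ⁿ), where T(θ,i,j) = cos θ·I + i sin θ·E_{(i,j)} and E_{(i,j)} is the unitary that exchanges bits i and j of the basis strings, and U′ the corresponding composition of ball-swap gates on ℂS_n, one has ⟨φ(x′)| U′ |φ(x)⟩ = k!·(n−k)!·⟨x′| U |x⟩ for all strings x, x′ of Hamming weight k. -/
namespace BallPerm

/-- Hamming weight of a bit string. -/
def wt {n : ℕ} (x : Fin n → Bool) : ℕ := (Finset.univ.filter fun p => x p = true).card

/-- The symmetrized encoding `φ(x) = Σ_{σ : x_p = 1 ↔ σ(p) ≤ k} |σ⟩ ∈ ℂS_n` of a bit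
string `x` of Hamming weight `k` (labels are 0-indexed, so `σ(p) ≤ k` becomes
`(σ p : ℕ) < k`). -/
noncomputable def phi (n k : ℕ) (x : Fin n → Bool) :
    MonoidAlgebra ℂ (Equiv.Perm (Fin n)) :=
  ∑ σ ∈ Finset.univ.filter
      (fun σ : Equiv.Perm (Fin n) => ∀ p, x p = true ↔ (σ p : ℕ) < k),
    MonoidAlgebra.single σ (1 : ℂ)

/-- The standard inner product on `ℂS_n` making the permutations orthonormal. -/
noncomputable def innerCS (n : ℕ) (u v : MonoidAlgebra ℂ (Equiv.Perm (Fin n))) : ℂ :=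
  ∑ σ : Equiv.Perm (Fin n), (starRingEnd ℂ) (u.coeff σ) * v.coeff σ

/-- The ball-swap gate `|σ⟩ ↦ cos θ·|σ⟩ + i sin θ·|σ∘(i j)⟩` on `ℂS_n`, where `σ∘(i j)`
exchanges the contents of positions `i` and `j`. -/
noncomputable def Bgate (n : ℕ) (θ : ℝ) (i j : Fin n) :
    Module.End ℂ (MonoidAlgebra ℂ (Equiv.Perm (Fin n))) :=
  (Real.cos θ : ℂ) • (1 : Module.End ℂ (MonoidAlgebra ℂ (Equiv.Perm (Fin n))))
    + (Complex.I * Real.sin θ) •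
      LinearMap.mulRight ℂ (MonoidAlgebra.single (Equiv.swap i j) (1 : ℂ))

/-- The exchange operator `E_{(i,j)} : |x⟩ ↦ |x∘(i j)⟩` on `ℂ^({0,1}ⁿ)`, swapping the
`i`-th and `j`-th bits of the basis strings. -/
noncomputable def Eop (n : ℕ) (i j : Fin n) :
    Module.End ℂ ((Fin n → Bool) → ℂ) :=
  LinearMap.funLeft ℂ ℂ (fun y p => y (Equiv.swap i j p))

/-- The exchange-interaction gate `T(θ,i,j) = cos θ·I + i sin θ·E_{(i,j)}` on
`ℂ^({0,1}ⁿ)`. -/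
noncomputable def Tgate (n : ℕ) (θ : ℝ) (i j : Fin n) :
    Module.End ℂ ((Fin n → Bool) → ℂ) :=
  (Real.cos θ : ℂ) • (1 : Module.End ℂ ((Fin n → Bool) → ℂ))
    + (Complex.I * Real.sin θ) • Eop n i j

end BallPerm

/-!
Think of `σ ∈ S_n` as placing ball `σ p` at position `p`; the bit string `pattern k σ` records
which positions hold one of the first `k` balls, and `φ(x)` is the indicator of the fibre of
`pattern k` over `x`. Extending `φ` linearly gives `Φ c = Σ_σ c (pattern k σ) |σ⟩`. Right
multiplication by `(i j)` moves balls between positions `i` and `j`, so it corresponds under `Φ`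
to the exchange `E_{(i,j)}`; hence every ball-swap gate, and every composite of them, intertwines
`Φ` with the matching exchange gates. Finally `⟨φ(x'), Φ c⟩ = c x' · #(fibre over x')`, and a
fibre is a product of two sets of bijections (ones ↔ first `k` balls, zeros ↔ the rest), of size
`k! (n-k)!`.
-/

open Equiv Finset
open scoped Nat

namespace Equiv.Perm

variable {α : Type*} (p q : α → Prop) [DecidablePred p] [DecidablePred q]

def equivProdOfForallIff :
    {σ : Perm α // ∀ a, p a ↔ q (σ a)} ≃
      ({a // p a} ≃ {a // q a}) × ({a // ¬p a} ≃ {a // ¬q a}) where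
  toFun σ := (σ.1.subtypeEquiv σ.2, σ.1.subtypeEquiv fun a => not_congr (σ.2 a))
  invFun ef := ⟨ef.1.subtypeCongr ef.2, fun a => by
    by_cases h : p a
    · simpa [Equiv.subtypeCongr, sumCompl_symm_apply_of_pos h, h] using (ef.1 ⟨a, h⟩).2
    · simpa [Equiv.subtypeCongr, sumCompl_symm_apply_of_neg h, h] using (ef.2 ⟨a, h⟩).2⟩
  left_inv σ := by
    ext a
    by_cases h : p a <;>
      simp [Equiv.subtypeCongr, sumCompl_symm_apply_of_pos, sumCompl_symm_apply_of_neg, h]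
  right_inv ef := by
    ext a <;> simp [Equiv.subtypeCongr, sumCompl_symm_apply_of_pos, sumCompl_symm_apply_of_neg, a.2]

theorem card_subtype_forall_iff [Fintype α] [DecidableEq α]
    (h : Fintype.card {a // p a} = Fintype.card {a // q a}) :
    Fintype.card {σ : Perm α // ∀ a, p a ↔ q (σ a)} =
      (Fintype.card {a // p a})! * (Fintype.card {a // ¬p a})! := by
  have hc : Fintype.card {a // ¬p a} = Fintype.card {a // ¬q a} := by
    rw [Fintype.card_subtype_compl, Fintype.card_subtype_compl, h]
  rw [Fintype.card_congr (equivProdOfForallIff p q), Fintype.card_prod,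
    Fintype.card_equiv (Fintype.equivOfCardEq h), Fintype.card_equiv (Fintype.equivOfCardEq hc)]

end Equiv.Perm

theorem List.prod_map_comp_eq_comp_prod_map {R M N ι : Type*} [CommSemiring R]
    [AddCommMonoid M] [Module R M] [AddCommMonoid N] [Module R N]
    (f : ι → Module.End R M) (g : ι → Module.End R N) (Φ : N →ₗ[R] M)
    (h : ∀ a, f a ∘ₗ Φ = Φ ∘ₗ g a) (l : List ι) :
    (l.map f).prod ∘ₗ Φ = Φ ∘ₗ (l.map g).prod := by
  induction l with
  | nil => rfl
  | cons a l ih =>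
    simp only [List.map_cons, List.prod_cons, Module.End.mul_eq_comp, LinearMap.comp_assoc, ih]
    rw [← LinearMap.comp_assoc, h, LinearMap.comp_assoc]

namespace BallPerm

variable {n : ℕ}

def pattern (k : ℕ) (σ : Perm (Fin n)) : Fin n → Bool := fun p => decide ((σ p : ℕ) < k)

theorem forall_iff_lt_iff_pattern_eq {k : ℕ} {x : Fin n → Bool} {σ : Perm (Fin n)} :
    (∀ p, x p = true ↔ (σ p : ℕ) < k) ↔ pattern k σ = x := by
  simp only [funext_iff, pattern]
  exact forall_congr' fun p => by cases x p <;> simp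

theorem pattern_mul (k : ℕ) (σ τ : Perm (Fin n)) :
    pattern k (σ * τ) = fun p => pattern k σ (τ p) := rfl

theorem coeff_phi (k : ℕ) (x : Fin n → Bool) (σ : Perm (Fin n)) :
    (phi n k x).coeff σ = if pattern k σ = x then 1 else 0 := by
  simp [phi, MonoidAlgebra.coeff_sum, Finsupp.single_apply, forall_iff_lt_iff_pattern_eq]

theorem card_pattern_eq {k : ℕ} (hk : k ≤ n) {x : Fin n → Bool} (hx : wt x = k) :
    #{σ : Perm (Fin n) | pattern k σ = x} = k ! * (n - k)! := by
  have hcard : Fintype.card {p // x p = true} = k := by rw [Fintype.card_subtype]; exact hx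
  have hcard' : Fintype.card {m : Fin n // (m : ℕ) < k} = k := by
    rw [Fintype.card_subtype, Fin.card_filter_val_lt, min_eq_right hk]
  have := Perm.card_subtype_forall_iff (fun p => x p = true) (fun m : Fin n => (m : ℕ) < k)
    (hcard.trans hcard'.symm)
  simp only [forall_iff_lt_iff_pattern_eq, Fintype.card_subtype_compl, hcard,
    Fintype.card_fin] at this
  rw [← this, Fintype.card_subtype]

noncomputable def phiLinear (n k : ℕ) :
    ((Fin n → Bool) → ℂ) →ₗ[ℂ] MonoidAlgebra ℂ (Perm (Fin n)) :=
  Fintype.linearCombination ℂ (phi n k)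

theorem phiLinear_single (k : ℕ) (x : Fin n → Bool) :
    phiLinear n k (Pi.single x 1) = phi n k x := by
  rw [phiLinear, Fintype.linearCombination_apply_single, one_smul]

theorem coeff_phiLinear (k : ℕ) (c : (Fin n → Bool) → ℂ) (σ : Perm (Fin n)) :
    (phiLinear n k c).coeff σ = c (pattern k σ) := by
  simp [phiLinear, Fintype.linearCombination_apply, MonoidAlgebra.coeff_sum, coeff_phi]

theorem innerCS_phi_phiLinear {k : ℕ} (hk : k ≤ n) {x : Fin n → Bool} (hx : wt x = k)
    (c : (Fin n → Bool) → ℂ) :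
    innerCS n (phi n k x) (phiLinear n k c) = ((k ! * (n - k)! : ℕ) : ℂ) * c x := by
  simp only [innerCS, coeff_phi, coeff_phiLinear, apply_ite, map_one, map_zero, ite_mul,
    one_mul, zero_mul]
  rw [← Finset.sum_filter, Finset.sum_congr rfl fun σ hσ => by rw [(Finset.mem_filter.1 hσ).2],
    Finset.sum_const, card_pattern_eq hk hx, nsmul_eq_mul]

theorem mulRight_swap_comp_phiLinear (k : ℕ) (i j : Fin n) :
    LinearMap.mulRight ℂ (MonoidAlgebra.single (swap i j) (1 : ℂ)) ∘ₗ phiLinear n k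
      = phiLinear n k ∘ₗ Eop n i j := by
  ext c σ
  simp [coeff_phiLinear, Eop, LinearMap.funLeft, pattern_mul]

theorem Bgate_comp_phiLinear (k : ℕ) (θ : ℝ) (i j : Fin n) :
    Bgate n θ i j ∘ₗ phiLinear n k = phiLinear n k ∘ₗ Tgate n θ i j := by
  simp only [Bgate, Tgate, LinearMap.add_comp, LinearMap.comp_add, LinearMap.smul_comp,
    LinearMap.comp_smul, Module.End.one_eq_id, LinearMap.id_comp, LinearMap.comp_id,
    mulRight_swap_comp_phiLinear]

theorem Eop_single (i j : Fin n) (x : Fin n → Bool) :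
    Eop n i j (Pi.single x 1) = Pi.single (fun p => x (swap i j p)) 1 := by
  ext y
  have hswap : (fun p => y (swap i j p)) = x ↔ y = fun p => x (swap i j p) := by
    constructor <;> rintro rfl <;> simp
  simp [Eop, LinearMap.funLeft, Pi.single_apply, hswap]

theorem Bgate_phi (k : ℕ) (θ : ℝ) (i j : Fin n) (x : Fin n → Bool) :
    Bgate n θ i j (phi n k x)
      = (Real.cos θ : ℂ) • phi n k x
        + (Complex.I * Real.sin θ) • phi n k (fun p => x (swap i j p)) := by
  rw [← phiLinear_single, ← LinearMap.comp_apply, Bgate_comp_phiLinear]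
  simp [Tgate, Eop_single, phiLinear_single]

end BallPerm

open BallPerm in
theorem ballPermuting_simulates_exchange_general (n k : ℕ) (hk : k ≤ n) :
    (∀ x x' : Fin n → Bool, wt x = k → wt x' = k →
      innerCS n (phi n k x') (phi n k x)
        = if x = x' then ((k.factorial * (n - k).factorial : ℕ) : ℂ) else 0) ∧
    (∀ x : Fin n → Bool, wt x = k → ∀ i j : Fin n, i ≠ j → ∀ θ : ℝ,
      Bgate n θ i j (phi n k x)
        = (Real.cos θ : ℂ) • phi n k x
          + (Complex.I * Real.sin θ) • phi n k (fun p => x (Equiv.swap i j p))) ∧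
    (∀ gates : List (ℝ × Fin n × Fin n),
      (∀ g ∈ gates, g.2.1 ≠ g.2.2) →
      ∀ x x' : Fin n → Bool, wt x = k → wt x' = k →
        innerCS n (phi n k x')
            (((gates.map fun g => Bgate n g.1 g.2.1 g.2.2).prod) (phi n k x))
          = ((k.factorial * (n - k).factorial : ℕ) : ℂ) *
            (((gates.map fun g => Tgate n g.1 g.2.1 g.2.2).prod)
              (Pi.single x (1 : ℂ)) x')) := by
  refine ⟨fun x x' _ hx' => ?_, fun x _ i j _ θ => Bgate_phi k θ i j x,
    fun gates _ x x' _ hx' => ?_⟩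
  · rw [← phiLinear_single k x, innerCS_phi_phiLinear hk hx', Pi.single_apply]
    simp [eq_comm]
  · have hcomm := List.prod_map_comp_eq_comp_prod_map
      (fun g : ℝ × Fin n × Fin n => Bgate n g.1 g.2.1 g.2.2) (fun g => Tgate n g.1 g.2.1 g.2.2)
      (phiLinear n k) (fun g => Bgate_comp_phiLinear k g.1 g.2.1 g.2.2) gates
    rw [← phiLinear_single k x, ← LinearMap.comp_apply, hcomm, LinearMap.comp_apply,
      innerCS_phi_phiLinear hk hx']

open BallPerm in
/-- Simulation of exchange-interaction circuits by ball permutation: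
(i) the encodings `φ(x)` of weight-`k` strings are pairwise orthogonal with squared norm
`k!·(n−k)!`; (ii) a ball-swap gate acts on `φ(x)` exactly as the corresponding exchange
gate acts on `|x⟩`; (iii) hence any composition `U` of exchange gates is simulated by the
corresponding composition `U′` of ball-swap gates: `⟨φ(x′)|U′|φ(x)⟩ = k!(n−k)!·⟨x′|U|x⟩`. -/
theorem ballPermuting_simulates_exchange (n k : ℕ) (hn : 1 ≤ n) (hk : k ≤ n) :
    (∀ x x' : Fin n → Bool, wt x = k → wt x' = k →
      innerCS n (phi n k x') (phi n k x)
        = if x = x' then ((k.factorial * (n - k).factorial : ℕ) : ℂ) else 0) ∧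
    (∀ x : Fin n → Bool, wt x = k → ∀ i j : Fin n, i ≠ j → ∀ θ : ℝ,
      Bgate n θ i j (phi n k x)
        = (Real.cos θ : ℂ) • phi n k x
          + (Complex.I * Real.sin θ) • phi n k (fun p => x (Equiv.swap i j p))) ∧
    (∀ gates : List (ℝ × Fin n × Fin n),
      (∀ g ∈ gates, g.2.1 ≠ g.2.2) →
      ∀ x x' : Fin n → Bool, wt x = k → wt x' = k →
        innerCS n (phi n k x')
            (((gates.map fun g => Bgate n g.1 g.2.1 g.2.2).prod) (phi n k x))
          = ((k.factorial * (n - k).factorial : ℕ) : ℂ) *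
            (((gates.map fun g => Tgate n g.1 g.2.1 g.2.2).prod)
              (Pi.single x (1 : ℂ)) x')) :=
  ballPermuting_simulates_exchange_general n k hk
end
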